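/- arXiv:quant-ph/0510058 — 3 statements merged into one kernel-verified Lean document; each statement's English description precedes it below -/
import Mathlib

section
/- Let v_1,...,v_N ∈ L^2([0,∞)), λ ∈ ℝ, and real numbers ω_1 ≤ ... ≤ ω_N. For E < 0 define the Hermitian matrix K(E) = K_0 - λ² S(E), where K_0 = diag(ω_1,...,ω_N) and S_{nn'}(E) = ∫_0^∞ v_n*(ω)v_{n'}(ω)/(ω-E) dω. Let κ_1(E) ≤ ... ≤ κ_N(E) be the eigenvalues of K(E) in increasing order. Then for each fixed n, κ_n is monotone nonincreasing in E: if E' ≤ E < 0 then κ_n(E') ≥ κ_n(E). -/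
open MeasureTheory ComplexOrder

/-- The matrix `S(E)` with entries `∫_0^∞ v_n*(ω) v_{n'}(ω)/(ω - E) dω`. -/
noncomputable def Smat (N : ℕ) (v : Fin N → ℝ → ℂ) (E : ℝ) : Matrix (Fin N) (Fin N) ℂ :=
  Matrix.of fun n n' =>
    ∫ ω in Set.Ioi (0 : ℝ), (starRingEnd ℂ) (v n ω) * v n' ω / ((ω : ℂ) - (E : ℂ))

/-- `K(E) = diag(ω_1,…,ω_N) - λ² S(E)`. -/
noncomputable def Kmat (N : ℕ) (v : Fin N → ℝ → ℂ) (w : Fin N → ℝ) (lam : ℝ) (E : ℝ) :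
    Matrix (Fin N) (Fin N) ℂ :=
  Matrix.diagonal (fun n => (w n : ℂ)) - ((lam : ℂ) ^ 2) • Smat N v E

/-- The eigenvalues of a Hermitian matrix, listed in increasing order. -/
noncomputable def sortedEig {N : ℕ} {A : Matrix (Fin N) (Fin N) ℂ} (hA : A.IsHermitian) :
    Fin N → ℝ :=
  hA.eigenvalues ∘ Tuple.sort hA.eigenvalues

/-!
For `E' ≤ E < 0` the diagonal parts cancel and `K(E') - K(E) = λ² (S(E) - S(E'))`, where
`S(E) - S(E')` is the Gram matrix of the `v_n` against the weight `(ω - E)⁻¹ - (ω - E')⁻¹ ≥ 0` on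
`(0, ∞)`; so `K(E) ≤ K(E')` in the Loewner order. Weyl's monotonicity theorem then compares the
sorted eigenvalues: a dimension count produces a nonzero `x` orthogonal to the eigenvectors of
`K(E)` below index `n` and to those of `K(E')` above index `n`, and the Rayleigh quotient of `x`
is squeezed between `κ_n(E)` and `κ_n(E')`.
-/

open Matrix
open scoped InnerProductSpace MatrixOrder ComplexConjugate

section Rayleigh

variable {𝕜 ι : Type*} [RCLike 𝕜] [Fintype ι] [DecidableEq ι] {A : Matrix ι ι 𝕜}

theorem Matrix.IsHermitian.re_inner_toEuclideanLin_self (hA : A.IsHermitian)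
    (x : EuclideanSpace 𝕜 ι) :
    RCLike.re ⟪x, A.toEuclideanLin x⟫_𝕜 =
      ∑ i, hA.eigenvalues i * ‖⟪hA.eigenvectorBasis i, x⟫_𝕜‖ ^ 2 := by
  set u := hA.eigenvectorBasis
  have hu (i : ι) : A.toEuclideanLin (u i) = (hA.eigenvalues i : 𝕜) • u i := by
    apply WithLp.ofLp_injective
    rw [Matrix.ofLp_toLpLin, Matrix.toLin'_apply, hA.mulVec_eigenvectorBasis, WithLp.ofLp_smul,
      RCLike.real_smul_eq_coe_smul (K := 𝕜)]
  have hsymm := Matrix.isSymmetric_toEuclideanLin_iff.mpr hA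
  rw [← u.sum_inner_mul_inner, map_sum]
  refine Finset.sum_congr rfl fun i _ => ?_
  rw [← hsymm, hu, inner_smul_left, ← inner_conj_symm x, RCLike.conj_ofReal]
  rw [mul_left_comm, RCLike.conj_mul, RCLike.re_ofReal_mul, ← RCLike.ofReal_pow, RCLike.ofReal_re]

theorem Matrix.re_inner_toEuclideanLin_mono {A B : Matrix ι ι 𝕜} (hAB : A ≤ B)
    (x : EuclideanSpace 𝕜 ι) :
    RCLike.re ⟪x, A.toEuclideanLin x⟫_𝕜 ≤ RCLike.re ⟪x, B.toEuclideanLin x⟫_𝕜 := by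
  have := (isPositive_toEuclideanLin_iff.mpr (le_iff.mp hAB)).re_inner_nonneg_right x
  rwa [map_sub, LinearMap.sub_apply, inner_sub_right, map_sub, sub_nonneg] at this

end Rayleigh

theorem exists_ne_zero_forall_inner_eq_zero {𝕜 E ι : Type*} [RCLike 𝕜] [NormedAddCommGroup E]
    [InnerProductSpace 𝕜 E] [FiniteDimensional 𝕜 E] [Fintype ι] (b : ι → E)
    (h : Fintype.card ι < Module.finrank 𝕜 E) : ∃ x ≠ 0, ∀ i, ⟪b i, x⟫_𝕜 = 0 := by
  let f : E →ₗ[𝕜] ι → 𝕜 := LinearMap.pi fun i => innerₛₗ 𝕜 (b i)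
  obtain ⟨x, hx, hx0⟩ := Submodule.exists_mem_ne_zero_of_ne_bot
    (LinearMap.ker_ne_bot_of_finrank_lt (f := f) (by simpa using h))
  exact ⟨x, hx0, fun i => congrFun (LinearMap.mem_ker.mp hx) i⟩

namespace Matrix.IsHermitian

variable {N : ℕ} {A B : Matrix (Fin N) (Fin N) ℂ}

noncomputable def sortedEigenvectorBasis (hA : A.IsHermitian) :
    OrthonormalBasis (Fin N) ℂ (EuclideanSpace ℂ (Fin N)) :=
  hA.eigenvectorBasis.reindex (Tuple.sort hA.eigenvalues).symm

theorem sortedEig_monotone (hA : A.IsHermitian) : Monotone (sortedEig hA) :=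
  Tuple.monotone_sort _

theorem re_inner_toEuclideanLin_self_eq_sum_sortedEig (hA : A.IsHermitian)
    (x : EuclideanSpace ℂ (Fin N)) :
    RCLike.re ⟪x, A.toEuclideanLin x⟫_ℂ =
      ∑ k, sortedEig hA k * ‖⟪hA.sortedEigenvectorBasis k, x⟫_ℂ‖ ^ 2 := by
  rw [hA.re_inner_toEuclideanLin_self, ← Equiv.sum_comp (Tuple.sort hA.eigenvalues)]
  simp [sortedEig, sortedEigenvectorBasis]

theorem sortedEig_mul_norm_sq_le (hA : A.IsHermitian) {n : Fin N} {x : EuclideanSpace ℂ (Fin N)}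
    (hx : ∀ k < n, ⟪hA.sortedEigenvectorBasis k, x⟫_ℂ = 0) :
    sortedEig hA n * ‖x‖ ^ 2 ≤ RCLike.re ⟪x, A.toEuclideanLin x⟫_ℂ := by
  rw [hA.re_inner_toEuclideanLin_self_eq_sum_sortedEig,
    ← hA.sortedEigenvectorBasis.sum_sq_norm_inner_right, Finset.mul_sum]
  refine Finset.sum_le_sum fun k _ => ?_
  rcases lt_or_ge k n with hk | hk
  · simp [hx k hk]
  · exact mul_le_mul_of_nonneg_right (hA.sortedEig_monotone hk) (by positivity)

theorem re_inner_toEuclideanLin_self_le (hA : A.IsHermitian) {n : Fin N}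
    {x : EuclideanSpace ℂ (Fin N)} (hx : ∀ k, n < k → ⟪hA.sortedEigenvectorBasis k, x⟫_ℂ = 0) :
    RCLike.re ⟪x, A.toEuclideanLin x⟫_ℂ ≤ sortedEig hA n * ‖x‖ ^ 2 := by
  rw [hA.re_inner_toEuclideanLin_self_eq_sum_sortedEig,
    ← hA.sortedEigenvectorBasis.sum_sq_norm_inner_right, Finset.mul_sum]
  refine Finset.sum_le_sum fun k _ => ?_
  rcases lt_or_ge n k with hk | hk
  · simp [hx k hk]
  · exact mul_le_mul_of_nonneg_right (hA.sortedEig_monotone hk) (by positivity)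

theorem sortedEig_mono (hA : A.IsHermitian) (hB : B.IsHermitian) (hAB : A ≤ B) (n : Fin N) :
    sortedEig hA n ≤ sortedEig hB n := by
  have hcard : Fintype.card ({k // k < n} ⊕ {k // n < k}) < N := by
    rw [Fintype.card_sum, Fintype.card_subtype, Fintype.card_subtype, Finset.filter_lt_eq_Ioi,
      Finset.filter_gt_eq_Iio, Fin.card_Ioi, Fin.card_Iio]
    omega
  obtain ⟨x, hx0, hx⟩ := exists_ne_zero_forall_inner_eq_zero (𝕜 := ℂ)
    (Sum.elim (fun k : {k // k < n} => hA.sortedEigenvectorBasis k)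
      (fun k : {k // n < k} => hB.sortedEigenvectorBasis k)) (by simpa using hcard)
  have hlower := hA.sortedEig_mul_norm_sq_le (fun k hk => hx (Sum.inl ⟨k, hk⟩))
  have hupper := hB.re_inner_toEuclideanLin_self_le (fun k hk => hx (Sum.inr ⟨k, hk⟩))
  have hmid := Matrix.re_inner_toEuclideanLin_mono hAB x
  exact le_of_mul_le_mul_right (hlower.trans (hmid.trans hupper)) (by positivity)

end Matrix.IsHermitian

theorem Matrix.posSemidef_integral_conj_mul_mul {𝕜 ι α : Type*} [RCLike 𝕜] [Fintype ι]
    [MeasurableSpace α] {μ : Measure α} (f : ι → α → 𝕜) (c : α → ℝ) (hc : 0 ≤ᵐ[μ] c)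
    (hint : ∀ i j, Integrable (fun a => conj (f i a) * f j a * c a) μ) :
    (Matrix.of fun i j => ∫ a, conj (f i a) * f j a * c a ∂μ).PosSemidef := by
  refine Matrix.PosSemidef.of_dotProduct_mulVec_nonneg ?_ fun x => ?_
  · ext i j
    simp only [Matrix.conjTranspose_apply, Matrix.of_apply, RCLike.star_def, ← integral_conj,
      map_mul, RCLike.conj_conj, RCLike.conj_ofReal]
    congr 1 with a
    ring
  · set g : α → 𝕜 := fun a => ∑ j, x j * f j a
    have hexpand : star x ⬝ᵥ (Matrix.of (fun i j => ∫ a, conj (f i a) * f j a * c a ∂μ) *ᵥ x) =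
        ∫ a, ((‖g a‖ ^ 2 * c a : ℝ) : 𝕜) ∂μ := by
      have hsq (a : α) : ((‖g a‖ ^ 2 * c a : ℝ) : 𝕜) =
          ∑ i, ∑ j, conj (x i) * x j * (conj (f i a) * f j a * c a) := by
        rw [RCLike.ofReal_mul, RCLike.ofReal_pow, ← RCLike.conj_mul, map_sum, Finset.sum_mul_sum,
          Finset.sum_mul]
        refine Finset.sum_congr rfl fun i _ => ?_
        rw [Finset.sum_mul]
        refine Finset.sum_congr rfl fun j _ => ?_
        simp only [map_mul]
        ring
      simp_rw [hsq]
      rw [integral_finsetSum _ fun i _ => integrable_finsetSum _ fun j _ => (hint i j).const_mul _]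
      simp only [dotProduct, Matrix.mulVec, Matrix.of_apply, Pi.star_apply, RCLike.star_def,
        Finset.mul_sum]
      refine Finset.sum_congr rfl fun i _ => ?_
      rw [integral_finsetSum _ fun j _ => (hint i j).const_mul _]
      refine Finset.sum_congr rfl fun j _ => ?_
      rw [integral_const_mul]
      ring
    rw [hexpand, integral_ofReal, RCLike.ofReal_nonneg]
    exact integral_nonneg_of_ae (hc.mono fun a ha => mul_nonneg (sq_nonneg _) ha)

section Resolvent

open Set

variable {N : ℕ} {v : Fin N → ℝ → ℂ}

theorem integrable_conj_mul_div_sub (hv : ∀ n, MemLp (v n) 2 (volume.restrict (Ioi (0 : ℝ))))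
    {E : ℝ} (hE : E < 0) (n n' : Fin N) :
    Integrable (fun ω : ℝ => conj (v n ω) * v n' ω / ((ω : ℂ) - (E : ℂ)))
      (volume.restrict (Ioi 0)) := by
  have hprod : Integrable (fun ω => conj (v n ω) * v n' ω) (volume.restrict (Ioi 0)) :=
    (hv n).star.integrable_mul (hv n')
  refine hprod.mul_bdd (c := (-E)⁻¹) (by fun_prop) ?_
  refine (ae_restrict_iff' measurableSet_Ioi).mpr (ae_of_all _ fun ω (hω : 0 < ω) => ?_)
  rw [← Complex.ofReal_sub, norm_inv, Complex.norm_real, Real.norm_of_nonneg (by linarith)]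
  exact inv_anti₀ (by linarith) (by linarith)

theorem div_sub_div_sub_ofReal (z : ℂ) (ω E E' : ℝ) :
    z / ((ω : ℂ) - E) - z / ((ω : ℂ) - E') = z * (((ω - E)⁻¹ - (ω - E')⁻¹ : ℝ) : ℂ) := by
  push_cast
  ring

theorem posSemidef_Smat_sub (hv : ∀ n, MemLp (v n) 2 (volume.restrict (Ioi (0 : ℝ))))
    {E E' : ℝ} (hE'E : E' ≤ E) (hE : E < 0) : (Smat N v E - Smat N v E').PosSemidef := by
  have hE' : E' < 0 := hE'E.trans_lt hE
  have hdiff (n n' : Fin N) : (fun ω : ℝ => conj (v n ω) * v n' ω / ((ω : ℂ) - E)) -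
      (fun ω : ℝ => conj (v n ω) * v n' ω / ((ω : ℂ) - E')) =
      fun ω => conj (v n ω) * v n' ω * (((ω - E)⁻¹ - (ω - E')⁻¹ : ℝ) : ℂ) :=
    funext fun ω => div_sub_div_sub_ofReal _ ω E E'
  have hint (n n' : Fin N) := (integrable_conj_mul_div_sub hv hE n n').sub
    (integrable_conj_mul_div_sub hv hE' n n')
  have hS : Smat N v E - Smat N v E' = Matrix.of fun n n' =>
      ∫ ω in Ioi 0, conj (v n ω) * v n' ω * (((ω - E)⁻¹ - (ω - E')⁻¹ : ℝ) : ℂ) := by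
    ext n n'
    rw [Matrix.sub_apply, Smat, Smat, Matrix.of_apply, Matrix.of_apply, Matrix.of_apply,
      ← integral_sub (integrable_conj_mul_div_sub hv hE n n')
        (integrable_conj_mul_div_sub hv hE' n n'), ← hdiff]
    rfl
  rw [hS]
  refine Matrix.posSemidef_integral_conj_mul_mul v _ ?_ fun n n' => hdiff n n' ▸ hint n n'
  refine (ae_restrict_iff' measurableSet_Ioi).mpr (ae_of_all _ fun ω (hω : 0 < ω) => ?_)
  exact sub_nonneg.mpr (inv_anti₀ (by linarith) (by linarith))

end Resolvent

theorem Kmat_le_Kmat {N : ℕ} {v : Fin N → ℝ → ℂ}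
    (hv : ∀ n, MemLp (v n) 2 (volume.restrict (Set.Ioi (0 : ℝ)))) (w : Fin N → ℝ) (lam : ℝ)
    {E E' : ℝ} (hE'E : E' ≤ E) (hE : E < 0) : Kmat N v w lam E ≤ Kmat N v w lam E' := by
  have hK : Kmat N v w lam E' - Kmat N v w lam E =
      ((lam : ℂ) ^ 2) • (Smat N v E - Smat N v E') := by
    simp only [Kmat, smul_sub]
    abel
  rw [Matrix.le_iff, hK]
  exact (posSemidef_Smat_sub hv hE'E hE).smul (by exact_mod_cast sq_nonneg lam)

theorem stmt2_general (N : ℕ) (v : Fin N → ℝ → ℂ)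
    (hv : ∀ n, MemLp (v n) 2 (volume.restrict (Set.Ioi (0 : ℝ))))
    (w : Fin N → ℝ) (lam : ℝ)
    (hK : ∀ E : ℝ, E < 0 → (Kmat N v w lam E).IsHermitian)
    (n : Fin N) (E E' : ℝ) (hE'E : E' ≤ E) (hE : E < 0) :
    sortedEig (hK E hE) n ≤ sortedEig (hK E' (lt_of_le_of_lt hE'E hE)) n :=
  Matrix.IsHermitian.sortedEig_mono _ _ (Kmat_le_Kmat hv w lam hE'E hE) n

/-- Each `κ_n` is monotone nonincreasing in `E` on `(-∞,0)`. -/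
theorem stmt2 (N : ℕ) (v : Fin N → ℝ → ℂ)
    (hv : ∀ n, MemLp (v n) 2 (volume.restrict (Set.Ioi (0 : ℝ))))
    (w : Fin N → ℝ) (hw : Monotone w) (lam : ℝ)
    (hK : ∀ E : ℝ, E < 0 → (Kmat N v w lam E).IsHermitian)
    (n : Fin N) (E E' : ℝ) (hE'E : E' ≤ E) (hE : E < 0) :
    sortedEig (hK E hE) n ≤ sortedEig (hK E' (lt_of_le_of_lt hE'E hE)) n :=
  stmt2_general N v hv w lam hK n E E' hE'E hE
end

section
/- Single-level case: let v ∈ L^2([0,∞)), λ ≠ 0, ω_1 ∈ ℝ, and κ(E) = ω_1 - λ² ∫_0^∞ |v(ω)|²/(ω-E) dω for E < 0. If lim_{E↑0} κ(E) < 0 (allowing the limit to be -∞), then the equation κ(E) = E has exactly one solution E < 0. Conversely, if lim_{E↑0} κ(E) ≥ 0 then κ(E) = E has no solution in (-∞, 0). -/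
/-!
`κ` is continuous and antitone on `(-∞, 0)`, since `E ↦ 1 / (ω - E)` increases with `E` for
`ω > 0` and is dominated by `1 / |E|`. Hence `E ↦ κ E - E` is strictly decreasing there, which
gives uniqueness, and it is positive far to the left because `κ E ≥ κ a` for `E ≤ a`. A negative
limit at `0⁻` makes `κ a - a` negative for some `a < 0`, and the intermediate value theorem gives
the root. A limit `L ≥ 0` bounds the antitone `κ` below by `L`, so `κ E ≥ 0 > E`.
-/

open MeasureTheory

/-- Single-level `κ(E) = ω₁ - λ² ∫_0^∞ |v(ω)|²/(ω-E) dω`. -/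
noncomputable def kappa1 (v : ℝ → ℂ) (lam w1 : ℝ) (E : ℝ) : ℝ :=
  w1 - lam ^ 2 * ∫ ω in Set.Ioi (0 : ℝ), ‖v ω‖ ^ 2 / (ω - E)

open Set Filter Topology

lemma norm_div_sub_le_of_le_of_neg {x ω E c : ℝ} (hω : 0 < ω) (hEc : E ≤ c) (hc : c < 0) :
    ‖x / (ω - E)‖ ≤ ‖x‖ * (-c)⁻¹ := by
  rw [norm_div, div_eq_mul_inv, Real.norm_of_nonneg (show 0 ≤ ω - E by linarith)]
  gcongr <;> linarith

section CauchyTransform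

variable {f : ℝ → ℝ}

lemma integrableOn_div_sub_of_neg (hf : IntegrableOn f (Ioi 0)) {E : ℝ} (hE : E < 0) :
    IntegrableOn (fun ω => f ω / (ω - E)) (Ioi 0) := by
  have hmeas : AEStronglyMeasurable (fun ω => f ω / (ω - E)) (volume.restrict (Ioi 0)) :=
    (hf.aemeasurable.div (measurable_id.sub_const E).aemeasurable).aestronglyMeasurable
  refine (hf.norm.mul_const (-E)⁻¹).mono' hmeas ?_
  filter_upwards [ae_restrict_mem measurableSet_Ioi] with ω hω
  exact norm_div_sub_le_of_le_of_neg hω le_rfl hE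

lemma monotoneOn_integral_div_sub (hf : IntegrableOn f (Ioi 0)) (hf₀ : ∀ ω ∈ Ioi 0, 0 ≤ f ω) :
    MonotoneOn (fun E => ∫ ω in Ioi 0, f ω / (ω - E)) (Iio 0) := by
  intro E₁ hE₁ E₂ hE₂ h
  refine setIntegral_mono_on (integrableOn_div_sub_of_neg hf hE₁)
    (integrableOn_div_sub_of_neg hf hE₂) measurableSet_Ioi fun ω hω => ?_
  have : 0 < ω - E₂ := by linarith [mem_Ioi.mp hω, mem_Iio.mp hE₂]
  gcongr
  exact hf₀ ω hω

lemma continuousOn_integral_div_sub (hf : IntegrableOn f (Ioi 0)) :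
    ContinuousOn (fun E => ∫ ω in Ioi 0, f ω / (ω - E)) (Iio 0) := by
  intro E₀ hE₀
  have hE₀ : E₀ < 0 := hE₀
  refine ContinuousAt.continuousWithinAt <| continuousAt_of_dominated
    (bound := fun ω => ‖f ω‖ * (-(E₀ / 2))⁻¹) ?_ ?_ (hf.norm.mul_const _) ?_
  · filter_upwards [Iio_mem_nhds hE₀] with E hE
    exact (integrableOn_div_sub_of_neg hf hE).aestronglyMeasurable
  · filter_upwards [Iio_mem_nhds (show E₀ < E₀ / 2 by linarith)] with E hE
    filter_upwards [ae_restrict_mem measurableSet_Ioi] with ω hω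
    exact norm_div_sub_le_of_le_of_neg hω (le_of_lt hE) (by linarith)
  · filter_upwards [ae_restrict_mem measurableSet_Ioi] with ω hω
    have : ω - E₀ ≠ 0 := by linarith [mem_Ioi.mp hω]
    fun_prop (disch := assumption)

end CauchyTransform

section Kappa

variable {v : ℝ → ℂ} (lam w1 : ℝ)

lemma antitoneOn_kappa1 (hv : MemLp v 2 (volume.restrict (Ioi 0))) :
    AntitoneOn (kappa1 v lam w1) (Iio 0) := fun _ ha _ hb hab => by
  have := monotoneOn_integral_div_sub (hv.integrable_norm_pow two_ne_zero)
    (fun ω _ => sq_nonneg ‖v ω‖) ha hb hab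
  unfold kappa1
  gcongr

lemma continuousOn_kappa1 (hv : MemLp v 2 (volume.restrict (Ioi 0))) :
    ContinuousOn (kappa1 v lam w1) (Iio 0) :=
  continuousOn_const.sub <| continuousOn_const.mul <|
    continuousOn_integral_div_sub (hv.integrable_norm_pow two_ne_zero)

end Kappa

section FixedPoint

variable {κ : ℝ → ℝ}

lemma existsUnique_neg_fixedPoint_of_antitoneOn (hanti : AntitoneOn κ (Iio 0))
    (hcont : ContinuousOn κ (Iio 0)) {a : ℝ} (ha : a < 0) (hκa : κ a < a) :
    ∃! E : ℝ, E < 0 ∧ κ E = E := by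
  have hstrict : StrictAntiOn (fun E => κ E - E) (Iio 0) := fun x hx y hy hxy => by
    linarith [hanti hx hy hxy.le]
  obtain ⟨b, hba, hκb⟩ : ∃ b ≤ a, b < κ b := by
    refine ⟨min a (κ a) - 1, by linarith [min_le_left a (κ a)], ?_⟩
    have hb : min a (κ a) - 1 < 0 := by linarith [min_le_left a (κ a)]
    linarith [min_le_right a (κ a), hanti hb ha (by linarith [min_le_left a (κ a)])]
  have hsub : Icc b a ⊆ Iio 0 := fun x hx => hx.2.trans_lt ha
  obtain ⟨c, hc, hc₀⟩ := intermediate_value_Icc' (f := fun E => κ E - E) hba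
    ((hcont.mono hsub).sub continuousOn_id)
    (show (0 : ℝ) ∈ Icc _ _ from ⟨by linarith, by linarith⟩)
  have hc0 : c < 0 := hsub hc
  refine ⟨c, ⟨hc0, sub_eq_zero.mp hc₀⟩, fun y ⟨hy, hκy⟩ => hstrict.injOn hy hc0 ?_⟩
  simp only [hκy, sub_self, hc₀]

lemma exists_neg_lt_self_of_eventually_lt_neg {m : ℝ} (hm : m < 0)
    (h : ∀ᶠ E in 𝓝[<] 0, κ E < m) : ∃ a < 0, κ a < a := by
  have hE : ∀ᶠ E in 𝓝[<] (0 : ℝ), m < E ∧ E < 0 :=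
    (eventually_nhdsWithin_of_eventually_nhds (eventually_gt_nhds hm)).and
      eventually_mem_nhdsWithin
  obtain ⟨a, hκa, hma, ha⟩ := (h.and hE).exists
  exact ⟨a, ha, hκa.trans hma⟩

lemma ne_of_antitoneOn_of_tendsto_nonneg (hanti : AntitoneOn κ (Iio 0)) {L : ℝ} (hL : 0 ≤ L)
    (h : Tendsto κ (𝓝[<] 0) (𝓝 L)) {E : ℝ} (hE : E < 0) : κ E ≠ E := by
  have hle : ∀ᶠ x in 𝓝[<] (0 : ℝ), κ x ≤ κ E := by
    filter_upwards [eventually_nhdsWithin_of_eventually_nhds (eventually_gt_nhds hE),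
      eventually_mem_nhdsWithin] with x hx hx₀
    exact hanti hE hx₀ hx.le
  exact (hE.trans_le (hL.trans (le_of_tendsto h hle))).ne'

end FixedPoint

theorem stmt7_general (v : ℝ → ℂ) (hv : MemLp v 2 (volume.restrict (Set.Ioi (0 : ℝ))))
    (lam : ℝ) (w1 : ℝ) :
    ((Filter.Tendsto (kappa1 v lam w1) (nhdsWithin 0 (Set.Iio 0)) Filter.atBot ∨
        ∃ L : ℝ, L < 0 ∧
          Filter.Tendsto (kappa1 v lam w1) (nhdsWithin 0 (Set.Iio 0)) (nhds L)) →
      ∃! E : ℝ, E < 0 ∧ kappa1 v lam w1 E = E) ∧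
    (∀ L : ℝ, 0 ≤ L →
      Filter.Tendsto (kappa1 v lam w1) (nhdsWithin 0 (Set.Iio 0)) (nhds L) →
      ∀ E : ℝ, E < 0 → kappa1 v lam w1 E ≠ E) := by
  have hanti := antitoneOn_kappa1 lam w1 hv
  refine ⟨fun hlim => ?_, fun L hL h E hE => ne_of_antitoneOn_of_tendsto_nonneg hanti hL h hE⟩
  obtain ⟨a, ha, hκa⟩ : ∃ a < 0, kappa1 v lam w1 a < a := by
    rcases hlim with hbot | ⟨L, hL, hlim⟩
    · exact exists_neg_lt_self_of_eventually_lt_neg neg_one_lt_zero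
        (hbot.eventually (eventually_lt_atBot (-1)))
    · exact exists_neg_lt_self_of_eventually_lt_neg (by linarith : L / 2 < 0)
        (hlim.eventually_lt_const (by linarith))
  exact existsUnique_neg_fixedPoint_of_antitoneOn hanti (continuousOn_kappa1 lam w1 hv) ha hκa

/-- If `lim_{E↑0} κ(E) < 0` (possibly `-∞`) then `κ(E) = E` has exactly one negative
solution; if the limit is `≥ 0` there is no negative solution. -/
theorem stmt7 (v : ℝ → ℂ) (hv : MemLp v 2 (volume.restrict (Set.Ioi (0 : ℝ))))
    (lam : ℝ) (hlam : lam ≠ 0) (w1 : ℝ) :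
    ((Filter.Tendsto (kappa1 v lam w1) (nhdsWithin 0 (Set.Iio 0)) Filter.atBot ∨
        ∃ L : ℝ, L < 0 ∧
          Filter.Tendsto (kappa1 v lam w1) (nhdsWithin 0 (Set.Iio 0)) (nhds L)) →
      ∃! E : ℝ, E < 0 ∧ kappa1 v lam w1 E = E) ∧
    (∀ L : ℝ, 0 ≤ L →
      Filter.Tendsto (kappa1 v lam w1) (nhdsWithin 0 (Set.Iio 0)) (nhds L) →
      ∀ E : ℝ, E < 0 → kappa1 v lam w1 E ≠ E) :=
  stmt7_general v hv lam w1
end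

section
/- Let η ∈ L¹([0,∞)) be of the form η(ω) = ω^p r(ω) with p > 0 and r ∈ C¹([0,∞)). Then the principal-value integral converges from the right: lim_{E↓0} P∫_0^∞ η(ω)/(ω - E) dω = ∫_0^∞ η(ω)/ω dω, where P∫ denotes the Cauchy principal value at ω = E. -/
open MeasureTheory Set Filter Metric Topology

/-!
For `0 < ε ≤ δ ≤ E` the truncated integral splits into the integral of `η ω / (ω - E)` outside
`(E - δ, E + δ)` plus the integral of the difference quotient `(η ω - η E) / (ω - E)` over
`(E - δ, E + δ) \ (E - ε, E + ε)`: the remaining term `η E / (ω - E)` is odd about `E`, so it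
integrates to zero over that symmetric set. Letting `ε ↓ 0` and taking `δ = E / 2`, the principal
value is an outer integral plus the integral of the difference quotient over `(E / 2, 3E / 2)`.

As `E ↓ 0`, the outer integral tends to `∫ η ω / ω` by dominated convergence, the dominating
function being `3 |η ω| / ω`, integrable because `|η ω| ≤ C ω ^ p` near `0`. The inner integral is
at most `E` times a bound on `|η'|` over `(E / 2, 3E / 2)`, and `|η' z| ≤ C' z ^ p / z` there, so it
is `O(E ^ p)`.
-/

theorem integral_eq_zero_of_sub_left_eq_neg {f : ℝ → ℝ} (a : ℝ) (hf : ∀ x, f (a - x) = -f x) :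
    ∫ x, f x = 0 := by
  have h := integral_sub_left_eq_self f volume a
  simp only [hf, integral_neg] at h
  linarith

theorem setIntegral_ball_sdiff_ball_inv_sub_eq_zero (c ε δ : ℝ) :
    ∫ x in ball c δ \ ball c ε, (x - c)⁻¹ = 0 := by
  rw [← integral_indicator (measurableSet_ball.diff measurableSet_ball)]
  refine integral_eq_zero_of_sub_left_eq_neg (2 * c) fun x => ?_
  have hdist : dist (2 * c - x) c = dist x c := by
    rw [Real.dist_eq, Real.dist_eq, ← abs_neg]
    ring_nf
  by_cases hx : x ∈ ball c δ \ ball c ε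
  · have hx' : 2 * c - x ∈ ball c δ \ ball c ε := by
      simpa only [Set.mem_sdiff, mem_ball, hdist] using hx
    rw [indicator_of_mem hx, indicator_of_mem hx', show 2 * c - x - c = -(x - c) by ring, inv_neg]
  · have hx' : 2 * c - x ∉ ball c δ \ ball c ε := by
      simpa only [Set.mem_sdiff, mem_ball, hdist] using hx
    rw [indicator_of_notMem hx, indicator_of_notMem hx', neg_zero]

theorem integrableOn_sdiff_ball_div_sub {η : ℝ → ℝ} {s : Set ℝ} {c ρ : ℝ} (hs : MeasurableSet s)
    (hη : IntegrableOn η s) (hρ : 0 < ρ) :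
    IntegrableOn (fun x => η x / (x - c)) (s \ ball c ρ) := by
  have hη' := hη.mono_set (sdiff_subset (t := ball c ρ))
  refine Integrable.mono' (hη'.norm.div_const ρ) (hη'.aestronglyMeasurable.div₀ (by fun_prop)) ?_
  refine ae_restrict_of_forall_mem (hs.diff measurableSet_ball) fun x hx => ?_
  have hρx : ρ ≤ |x - c| := by simpa [Real.dist_eq] using hx.2
  rw [norm_div, Real.norm_eq_abs (x - c)]
  exact div_le_div_of_nonneg_left (norm_nonneg _) hρ hρx

theorem abs_slope_le_of_hasDerivAt {f f' : ℝ → ℝ} {s : Set ℝ} {a L : ℝ} (hs : Convex ℝ s)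
    (ha : a ∈ s) (hf : ∀ x ∈ s, HasDerivAt f (f' x) x) (hf' : ∀ x ∈ s, |f' x| ≤ L) :
    ∀ x ∈ s, |(f x - f a) / (x - a)| ≤ L := by
  intro x hx
  rcases eq_or_ne x a with rfl | hne
  · simpa using (abs_nonneg _).trans (hf' x hx)
  rw [abs_div, div_le_iff₀ (abs_pos.2 (sub_ne_zero.2 hne))]
  exact hs.norm_image_sub_le_of_norm_hasDerivWithin_le (fun x hx => (hf x hx).hasDerivWithinAt)
    hf' ha hx

theorem tendsto_setIntegral_ball_nhdsGT_zero {f : ℝ → ℝ} {c δ L : ℝ} (hδ : 0 < δ)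
    (hf : ∀ x ∈ ball c δ, |f x| ≤ L) :
    Tendsto (fun ε => ∫ x in ball c ε, f x) (𝓝[>] 0) (𝓝 0) := by
  refine squeeze_zero_norm' (a := fun ε => L * (2 * ε)) ?_ ?_
  · filter_upwards [Ioc_mem_nhdsGT hδ] with ε hε
    rw [← Real.volume_real_ball hε.1.le]
    exact norm_setIntegral_le_of_norm_le_const measure_ball_lt_top
      fun x hx => hf x (ball_subset_ball hε.2 hx)
  · exact tendsto_nhdsWithin_of_tendsto_nhds (Continuous.tendsto' (by fun_prop) 0 0 (by simp))

theorem tendsto_setIntegral_Ioi_sdiff_Ioo_div_sub {η : ℝ → ℝ} {E δ L : ℝ} (hδ : 0 < δ)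
    (hδE : δ ≤ E) (hη : IntegrableOn η (Ioi 0))
    (hslope : ∀ ω ∈ ball E δ, |(η ω - η E) / (ω - E)| ≤ L) :
    Tendsto (fun ε => ∫ ω in Ioi 0 \ Ioo (E - ε) (E + ε), η ω / (ω - E)) (𝓝[>] 0)
      (𝓝 ((∫ ω in Ioi 0 \ Ioo (E - δ) (E + δ), η ω / (ω - E)) +
        ∫ ω in Ioo (E - δ) (E + δ), (η ω - η E) / (ω - E))) := by
  simp only [← Real.ball_eq_Ioo]
  set slope := fun ω => (η ω - η E) / (ω - E)
  have hball : ball E δ ⊆ Ioi 0 := fun ω hω => by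
    rw [Real.ball_eq_Ioo] at hω
    exact lt_of_le_of_lt (by linarith) hω.1
  have hηball := hη.mono_set hball
  have hslope_int : IntegrableOn slope (ball E δ) := by
    refine Integrable.mono' (integrableOn_const measure_ball_lt_top.ne) ?_
      (ae_restrict_of_forall_mem measurableSet_ball hslope)
    exact (hηball.aestronglyMeasurable.sub aestronglyMeasurable_const).div₀ (by fun_prop)
  have hsplit : ∀ ε ∈ Ioc 0 δ, ∫ ω in Ioi 0 \ ball E ε, η ω / (ω - E) =
      (∫ ω in Ioi 0 \ ball E δ, η ω / (ω - E)) +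
        ((∫ ω in ball E δ, slope ω) - ∫ ω in ball E ε, slope ω) := by
    rintro ε ⟨hε, hεδ⟩
    have hsub : ball E ε ⊆ ball E δ := ball_subset_ball hεδ
    have hconst : IntegrableOn (fun ω => η E * (ω - E)⁻¹) (ball E δ \ ball E ε) := by
      simpa only [div_eq_mul_inv] using integrableOn_sdiff_ball_div_sub (c := E) measurableSet_ball
        (integrableOn_const (C := η E) measure_ball_lt_top.ne) hε
    have hnear : ∫ ω in ball E δ \ ball E ε, η ω / (ω - E) =
        ∫ ω in ball E δ \ ball E ε, slope ω := by
      calc ∫ ω in ball E δ \ ball E ε, η ω / (ω - E)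
          = ∫ ω in ball E δ \ ball E ε, (slope ω + η E * (ω - E)⁻¹) := by
            congr 1 with ω
            simp only [slope, ← div_eq_mul_inv, ← add_div, sub_add_cancel]
        _ = ∫ ω in ball E δ \ ball E ε, slope ω := by
            rw [integral_add (hslope_int.mono_set sdiff_subset) hconst,
              integral_const_mul, setIntegral_ball_sdiff_ball_inv_sub_eq_zero, mul_zero, add_zero]
    rw [← sdiff_union_sdiff_cancel hball hsub,
      setIntegral_union (disjoint_sdiff_left.mono_right sdiff_subset)
        (measurableSet_ball.diff measurableSet_ball)
        (integrableOn_sdiff_ball_div_sub measurableSet_Ioi hη hδ)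
        (integrableOn_sdiff_ball_div_sub measurableSet_ball hηball hε),
      hnear, setIntegral_sdiff measurableSet_ball hslope_int hsub]
  have hshrink := tendsto_setIntegral_ball_nhdsGT_zero hδ hslope
  have hlim := (tendsto_const_nhds (x := ∫ ω in Ioi 0 \ ball E δ, η ω / (ω - E))).add
    ((tendsto_const_nhds (x := ∫ ω in ball E δ, slope ω)).sub hshrink)
  rw [sub_zero] at hlim
  exact hlim.congr' (eventually_of_mem (Ioc_mem_nhdsGT hδ) fun ε hε => (hsplit ε hε).symm)

theorem integrableOn_Ioi_div_self {η : ℝ → ℝ} {p C : ℝ} (hp : 0 < p)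
    (hη : IntegrableOn η (Ioi 0)) (hsmall : ∀ ω ∈ Ioc 0 1, |η ω| ≤ ω ^ p * C) :
    IntegrableOn (fun ω => η ω / ω) (Ioi 0) := by
  rw [← Ioc_union_Ioi_eq_Ioi zero_le_one]
  refine IntegrableOn.union ?_ ?_
  · have hη' := hη.mono_set (Ioc_subset_Ioi_self : Ioc (0 : ℝ) 1 ⊆ Ioi 0)
    refine Integrable.mono' ((intervalIntegral.intervalIntegrable_rpow' (a := 0) (b := 1)
      (r := p - 1) (by linarith)).1.mul_const C) (hη'.aestronglyMeasurable.div₀ (by fun_prop)) ?_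
    refine ae_restrict_of_forall_mem measurableSet_Ioc fun ω hω => ?_
    rw [norm_div, Real.norm_of_nonneg hω.1.le, Real.rpow_sub_one hω.1.ne', div_mul_eq_mul_div]
    exact div_le_div_of_nonneg_right (hsmall ω hω) hω.1.le
  · have hη' := hη.mono_set (Ioi_subset_Ioi zero_le_one)
    refine Integrable.mono' hη'.norm (hη'.aestronglyMeasurable.div₀ (by fun_prop)) ?_
    refine ae_restrict_of_forall_mem measurableSet_Ioi fun ω (hω : 1 < ω) => ?_
    rw [norm_div]
    exact div_le_self (norm_nonneg _) (by simpa [abs_of_pos (one_pos.trans hω)] using hω.le)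

theorem tendsto_setIntegral_Ioi_sdiff_Ioo_half_div_sub {η : ℝ → ℝ}
    (hη : AEStronglyMeasurable η (volume.restrict (Ioi 0)))
    (hdiv : IntegrableOn (fun ω => η ω / ω) (Ioi 0)) :
    Tendsto (fun E => ∫ ω in Ioi 0 \ Ioo (E - E / 2) (E + E / 2), η ω / (ω - E)) (𝓝[>] 0)
      (𝓝 (∫ ω in Ioi 0, η ω / ω)) := by
  have hind : ∀ E : ℝ, ∫ ω in Ioi 0 \ Ioo (E - E / 2) (E + E / 2), η ω / (ω - E) =
      ∫ ω in Ioi 0, (ball E (E / 2))ᶜ.indicator (fun ω => η ω / (ω - E)) ω := fun E => by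
    rw [setIntegral_indicator measurableSet_ball.compl, Real.ball_eq_Ioo, sdiff_eq]
  simp only [hind]
  refine tendsto_integral_filter_of_dominated_convergence
    (F := fun E ω => (ball E (E / 2))ᶜ.indicator (fun ω => η ω / (ω - E)) ω)
    (fun ω => 3 * ‖η ω / ω‖)
    (Eventually.of_forall fun E => (hη.div₀ (by fun_prop)).indicator measurableSet_ball.compl)
    ?_ (hdiv.norm.const_mul 3) ?_
  · filter_upwards [self_mem_nhdsWithin] with E (hE : 0 < E)
    refine ae_restrict_of_forall_mem measurableSet_Ioi fun ω (hω : 0 < ω) => ?_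
    by_cases hfar : ω ∈ (ball E (E / 2))ᶜ
    · have hdist : E / 2 ≤ |ω - E| := by simpa [Real.dist_eq] using hfar
      have hsep : ω / 3 ≤ |ω - E| := by
        cases abs_cases (ω - E) <;> linarith
      rw [indicator_of_mem hfar, norm_div, norm_div, Real.norm_of_nonneg hω.le]
      calc ‖η ω‖ / |ω - E| ≤ ‖η ω‖ / (ω / 3) :=
            div_le_div_of_nonneg_left (norm_nonneg _) (by positivity) hsep
        _ = 3 * (‖η ω‖ / ω) := by field_simp
    · rw [indicator_of_notMem hfar, norm_zero]
      positivity
  · refine ae_restrict_of_forall_mem measurableSet_Ioi fun ω (hω : 0 < ω) => ?_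
    have hlim : Tendsto (fun E => η ω / (ω - E)) (𝓝[>] 0) (𝓝 (η ω / ω)) := by
      refine tendsto_nhdsWithin_of_tendsto_nhds ?_
      have hcont : ContinuousAt (fun E => η ω / (ω - E)) 0 :=
        continuousAt_const.div (continuousAt_const.sub continuousAt_id) (by simpa using hω.ne')
      simpa using hcont.tendsto
    refine hlim.congr' ?_
    filter_upwards [Ioo_mem_nhdsGT (half_pos hω)] with E hE
    have hfar : ω ∈ (ball E (E / 2))ᶜ := by
      simp only [mem_compl_iff, mem_ball, Real.dist_eq, not_lt]
      rw [abs_of_pos] <;> linarith [hE.1, hE.2]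
    rw [indicator_of_mem hfar]

theorem tendsto_setIntegral_Ioo_half_slope {η g : ℝ → ℝ} (hg : Tendsto g (𝓝[>] 0) (𝓝 0))
    (hslope : ∀ᶠ E in 𝓝[>] 0, ∀ ω ∈ ball E (E / 2), |(η ω - η E) / (ω - E)| ≤ g E / E) :
    Tendsto (fun E => ∫ ω in Ioo (E - E / 2) (E + E / 2), (η ω - η E) / (ω - E)) (𝓝[>] 0)
      (𝓝 0) := by
  refine squeeze_zero_norm' ?_ hg
  filter_upwards [hslope, self_mem_nhdsWithin] with E hE (hE0 : 0 < E)
  calc ‖∫ ω in Ioo (E - E / 2) (E + E / 2), (η ω - η E) / (ω - E)‖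
      ≤ g E / E * volume.real (ball E (E / 2)) := by
        rw [← Real.ball_eq_Ioo]
        exact norm_setIntegral_le_of_norm_le_const measure_ball_lt_top hE
    _ = g E := by
        rw [Real.volume_real_ball (by positivity)]
        field_simp

section RpowMul

variable {η r : ℝ → ℝ} {p : ℝ}

theorem hasDerivAt_of_eq_rpow_mul (hr : ContDiffOn ℝ 1 r (Ici 0))
    (hη : ∀ ω : ℝ, 0 ≤ ω → η ω = ω ^ p * r ω) {x : ℝ} (hx : 0 < x) :
    HasDerivAt η (p * x ^ (p - 1) * r x + x ^ p * derivWithin r (Ici 0) x) x := by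
  have hr' : HasDerivAt r (derivWithin r (Ici 0) x) x := by
    rw [derivWithin_of_mem_nhds (Ici_mem_nhds hx)]
    exact ((hr.differentiableOn one_ne_zero x hx.le).differentiableAt (Ici_mem_nhds hx)).hasDerivAt
  refine ((Real.hasDerivAt_rpow_const (Or.inl hx.ne')).mul hr').congr_of_eventuallyEq ?_
  filter_upwards [Ioi_mem_nhds hx] with y hy using hη y hy.le

theorem abs_rpow_mul_add_le {p z a b A B : ℝ} (hp : 0 ≤ p) (hz : 0 < z) (hz1 : z ≤ 1)
    (ha : |a| ≤ A) (hb : |b| ≤ B) :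
    |p * z ^ (p - 1) * a + z ^ p * b| ≤ (p * A + B) * (z ^ p / z) := by
  have hB : 0 ≤ B := (abs_nonneg b).trans hb
  have hzp : z ^ p ≤ z ^ p / z := le_div_self (by positivity) hz hz1
  rw [Real.rpow_sub_one hz.ne']
  calc |p * (z ^ p / z) * a + z ^ p * b|
      ≤ |p * (z ^ p / z) * a| + |z ^ p * b| := abs_add_le _ _
    _ = p * (z ^ p / z) * |a| + z ^ p * |b| := by
        simp only [abs_mul, abs_of_nonneg hp, abs_of_nonneg (Real.rpow_nonneg hz.le p),
          abs_div, abs_of_pos hz]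
    _ ≤ p * (z ^ p / z) * A + (z ^ p / z) * B := by gcongr
    _ = (p * A + B) * (z ^ p / z) := by ring

theorem abs_le_rpow_mul_of_eq_rpow_mul (hη : ∀ ω : ℝ, 0 ≤ ω → η ω = ω ^ p * r ω) {A : ℝ}
    (hrA : ∀ x ∈ Icc (0 : ℝ) 1, ‖r x‖ ≤ A) : ∀ ω ∈ Ioc (0 : ℝ) 1, |η ω| ≤ ω ^ p * A := by
  intro ω hω
  rw [hη ω hω.1.le, abs_mul, abs_of_nonneg (Real.rpow_nonneg hω.1.le p)]
  exact mul_le_mul_of_nonneg_left (hrA ω (Ioc_subset_Icc_self hω)) (Real.rpow_nonneg hω.1.le p)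

theorem abs_slope_le_of_eq_rpow_mul (hp : 0 < p) (hr : ContDiffOn ℝ 1 r (Ici 0))
    (hη : ∀ ω : ℝ, 0 ≤ ω → η ω = ω ^ p * r ω) {A B : ℝ}
    (hrA : ∀ x ∈ Icc (0 : ℝ) 1, ‖r x‖ ≤ A)
    (hrB : ∀ x ∈ Icc (0 : ℝ) 1, ‖derivWithin r (Ici 0) x‖ ≤ B) {E : ℝ} (hE : 0 < E)
    (hE1 : E ≤ 1 / 2) :
    ∀ ω ∈ ball E (E / 2), |(η ω - η E) / (ω - E)| ≤ 2 * (p * A + B) * (2 * E) ^ p / E := by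
  have hA : 0 ≤ A := (norm_nonneg _).trans (hrA 0 ⟨le_rfl, zero_le_one⟩)
  have hB : 0 ≤ B := (norm_nonneg _).trans (hrB 0 ⟨le_rfl, zero_le_one⟩)
  have hbounds : ∀ z ∈ ball E (E / 2), E / 2 < z ∧ z < 2 * E ∧ z ≤ 1 := fun z hz => by
    rw [Real.ball_eq_Ioo] at hz
    exact ⟨by linarith [hz.1], by linarith [hz.2], by linarith [hz.2]⟩
  refine abs_slope_le_of_hasDerivAt (convex_ball E (E / 2)) (mem_ball_self (half_pos hE))
    (fun z hz => hasDerivAt_of_eq_rpow_mul hr hη ((half_pos hE).trans (hbounds z hz).1))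
    fun z hz => ?_
  obtain ⟨hz0, hz2, hz1⟩ := hbounds z hz
  have hzpos : 0 < z := (half_pos hE).trans hz0
  have hzI : z ∈ Icc (0 : ℝ) 1 := ⟨hzpos.le, hz1⟩
  calc |p * z ^ (p - 1) * r z + z ^ p * derivWithin r (Ici 0) z|
      ≤ (p * A + B) * (z ^ p / z) :=
        abs_rpow_mul_add_le hp.le hzpos hz1 (hrA z hzI) (hrB z hzI)
    _ ≤ (p * A + B) * ((2 * E) ^ p / (E / 2)) := by gcongr
    _ = 2 * (p * A + B) * (2 * E) ^ p / E := by field_simp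

end RpowMul

/-- If `η(ω) = ω^p r(ω)` with `p > 0`, `r ∈ C¹([0,∞))`, `η ∈ L¹([0,∞))`, and
`PV E` denotes the Cauchy principal value `P∫_0^∞ η(ω)/(ω-E) dω` for `E > 0`,
then `PV E → ∫_0^∞ η(ω)/ω dω` as `E ↓ 0`. -/
theorem stmt14 (η r : ℝ → ℝ) (p : ℝ) (hp : 0 < p)
    (hr : ContDiffOn ℝ 1 r (Set.Ici (0 : ℝ)))
    (hη : ∀ ω : ℝ, 0 ≤ ω → η ω = ω ^ p * r ω)
    (hL1 : IntegrableOn η (Set.Ioi (0 : ℝ)) volume)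
    (PV : ℝ → ℝ)
    (hPV : ∀ E : ℝ, 0 < E →
      Filter.Tendsto
        (fun ε : ℝ =>
          ∫ ω in Set.Ioi (0 : ℝ) \ Set.Ioo (E - ε) (E + ε), η ω / (ω - E))
        (nhdsWithin 0 (Set.Ioi 0)) (nhds (PV E))) :
    Filter.Tendsto PV (nhdsWithin 0 (Set.Ioi 0))
      (nhds (∫ ω in Set.Ioi (0 : ℝ), η ω / ω)) := by
  obtain ⟨A, hrA⟩ := isCompact_Icc.exists_bound_of_continuousOn
    (hr.continuousOn.mono (Icc_subset_Ici_self : Icc (0 : ℝ) 1 ⊆ Ici 0))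
  obtain ⟨B, hrB⟩ := isCompact_Icc.exists_bound_of_continuousOn
    ((hr.continuousOn_derivWithin (uniqueDiffOn_Ici 0) le_rfl).mono
      (Icc_subset_Ici_self : Icc (0 : ℝ) 1 ⊆ Ici 0))
  have hsmall : Ioc (0 : ℝ) (1 / 2) ∈ 𝓝[>] 0 := Ioc_mem_nhdsGT (by norm_num)
  have hslope := fun E (hE : E ∈ Ioc (0 : ℝ) (1 / 2)) =>
    abs_slope_le_of_eq_rpow_mul hp hr hη hrA hrB hE.1 hE.2
  have hg : Tendsto (fun E : ℝ => 2 * (p * A + B) * (2 * E) ^ p) (𝓝[>] 0) (𝓝 0) := by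
    have hcont : Continuous (fun E : ℝ => 2 * (p * A + B) * (2 * E) ^ p) :=
      continuous_const.mul ((continuous_const.mul continuous_id).rpow_const fun _ => Or.inr hp.le)
    exact tendsto_nhdsWithin_of_tendsto_nhds
      (by simpa [Real.zero_rpow hp.ne'] using hcont.tendsto 0)
  have hfar := tendsto_setIntegral_Ioi_sdiff_Ioo_half_div_sub hL1.aestronglyMeasurable
    (integrableOn_Ioi_div_self hp hL1 (abs_le_rpow_mul_of_eq_rpow_mul hη hrA))
  have hnear := tendsto_setIntegral_Ioo_half_slope hg (eventually_of_mem hsmall hslope)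
  have hPV_eq : (fun E => (∫ ω in Ioi 0 \ Ioo (E - E / 2) (E + E / 2), η ω / (ω - E)) +
      ∫ ω in Ioo (E - E / 2) (E + E / 2), (η ω - η E) / (ω - E)) =ᶠ[𝓝[>] 0] PV := by
    filter_upwards [hsmall] with E hE
    exact tendsto_nhds_unique (tendsto_setIntegral_Ioi_sdiff_Ioo_div_sub (half_pos hE.1)
      (half_le_self hE.1.le) hL1 (hslope E hE)) (hPV E hE.1)
  simpa using (hfar.add hnear).congr' hPV_eq
end
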